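/- If x ∈ ℝ^p is supported on a union of groups 𝒢* ⊆ 𝒢 and the groups in 𝒢* are pairwise disjoint (or x admits a decomposition over 𝒢* with disjoint supports), with maximum group size B and at most a fraction α ∈ (0,1] of coordinates nonzero in each used group, then h(x) ≤ (1 + √(Bα)) √(|𝒢*|) ‖x‖₂. -/
import Mathlib


open Finset

/-- Euclidean (ℓ2) norm of a vector in ℝ^p. -/
noncomputable def l2 {p : ℕ} (x : Fin p → ℝ) : ℝ := Real.sqrt (∑ i, (x i) ^ 2)

/-- ℓ1 norm of a vector in ℝ^p. -/
noncomputable def l1 {p : ℕ} (x : Fin p → ℝ) : ℝ := ∑ i, |x i|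

/-- `w` is supported on the group `G`. -/
def IsSupported {p : ℕ} (G : Finset (Fin p)) (w : Fin p → ℝ) : Prop :=
  ∀ i, i ∉ G → w i = 0

/-- A feasible decomposition of `x` over the group collection `𝒢`. -/
def Feasible {p : ℕ} (𝒢 : Finset (Finset (Fin p))) (x : Fin p → ℝ)
    (w : Finset (Fin p) → Fin p → ℝ) : Prop :=
  (∀ G ∈ 𝒢, IsSupported G (w G)) ∧ ∑ G ∈ 𝒢, w G = x

/-- The SOSlasso regularizer. -/
noncomputable def soslasso {p : ℕ} (𝒢 : Finset (Finset (Fin p))) (x : Fin p → ℝ) : ℝ :=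
  sInf ((fun w => ∑ G ∈ 𝒢, (l2 (w G) + l1 (w G))) '' {w | Feasible 𝒢 x w})

/-- The groups cover all of the coordinates. -/
def Covers {p : ℕ} (𝒢 : Finset (Finset (Fin p))) : Prop := ∀ i : Fin p, ∃ G ∈ 𝒢, i ∈ G

/-- Restriction of a vector to the coordinates in `G`. -/
def restr {p : ℕ} (G : Finset (Fin p)) (u : Fin p → ℝ) : Fin p → ℝ :=
  fun i => if i ∈ G then u i else 0

/-- The dual norm of the SOSlasso regularizer. -/
noncomputable def soslassoDual {p : ℕ} (𝒢 : Finset (Finset (Fin p))) (u : Fin p → ℝ) : ℝ :=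
  sSup {r | ∃ x : Fin p → ℝ, soslasso 𝒢 x ≤ 1 ∧ r = ∑ i, x i * u i}

lemma l2_nonneg' {p : ℕ} (x : Fin p → ℝ) : 0 ≤ l2 x := Real.sqrt_nonneg _

lemma l1_nonneg' {p : ℕ} (x : Fin p → ℝ) : 0 ≤ l1 x :=
  Finset.sum_nonneg fun _ _ => abs_nonneg _

lemma l2_sq' {p : ℕ} (x : Fin p → ℝ) : l2 x ^ 2 = ∑ i, x i ^ 2 :=
  Real.sq_sqrt (Finset.sum_nonneg fun _ _ => sq_nonneg _)

lemma sum_le_sqrt_card_mul {α : Type*} (s : Finset α) (f : α → ℝ)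
    (hf : ∀ a ∈ s, 0 ≤ f a) :
    ∑ a ∈ s, f a ≤ Real.sqrt s.card * Real.sqrt (∑ a ∈ s, f a ^ 2) := by
  have h := Finset.sum_mul_sq_le_sq_mul_sq s (fun _ => 1) f
  have h1 : (∑ a ∈ s, f a) ^ 2 ≤ (s.card : ℝ) * ∑ a ∈ s, f a ^ 2 := by
    simpa using h
  calc ∑ a ∈ s, f a ≤ Real.sqrt ((∑ a ∈ s, f a) ^ 2) := by
        rw [Real.sqrt_sq (Finset.sum_nonneg hf)]
    _ ≤ Real.sqrt ((s.card : ℝ) * ∑ a ∈ s, f a ^ 2) := Real.sqrt_le_sqrt h1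
    _ = _ := Real.sqrt_mul (by positivity) _

lemma l1_le_sqrt_mul_l2 {p : ℕ} (w : Fin p → ℝ) (c : ℝ)
    (h : ((Finset.univ.filter fun i => w i ≠ 0).card : ℝ) ≤ c) :
    l1 w ≤ Real.sqrt c * l2 w := by
  classical
  set s := Finset.univ.filter fun i => w i ≠ 0 with hs
  have hl1 : l1 w = ∑ i ∈ s, |w i| := by
    rw [l1]
    symm
    apply Finset.sum_subset (Finset.subset_univ s)
    intro i _ hi
    simp only [hs, Finset.mem_filter, Finset.mem_univ, true_and, not_not] at hi
    simp [hi]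
  have h1 : ∑ i ∈ s, |w i| ≤ Real.sqrt s.card * Real.sqrt (∑ i ∈ s, |w i| ^ 2) :=
    sum_le_sqrt_card_mul s _ fun i _ => abs_nonneg _
  have h2 : ∑ i ∈ s, |w i| ^ 2 ≤ ∑ i : Fin p, w i ^ 2 := by
    simp only [sq_abs]
    exact Finset.sum_le_sum_of_subset_of_nonneg (Finset.subset_univ s)
      fun i _ _ => sq_nonneg _
  calc l1 w = ∑ i ∈ s, |w i| := hl1
    _ ≤ Real.sqrt s.card * Real.sqrt (∑ i ∈ s, |w i| ^ 2) := h1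
    _ ≤ Real.sqrt c * Real.sqrt (∑ i : Fin p, w i ^ 2) := by
        apply mul_le_mul (Real.sqrt_le_sqrt h) (Real.sqrt_le_sqrt h2)
          (Real.sqrt_nonneg _) (Real.sqrt_nonneg _)
    _ = Real.sqrt c * l2 w := rfl

open Classical in
/-- subspace compatibility bound
`h(x) ≤ (1 + √(Bα)) √|𝒢*| ‖x‖₂` for `x` decomposable over active groups `𝒢*`
with disjoint supports and within-group sparsity fraction `α`. -/
theorem soslasso_compatibility {p : ℕ} (𝒢 𝒢s : Finset (Finset (Fin p)))
    (hsub : 𝒢s ⊆ 𝒢) (B : ℕ) (hB : ∀ G ∈ 𝒢, G.card ≤ B)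
    (α : ℝ) (hα0 : 0 < α) (hα1 : α ≤ 1)
    (x : Fin p → ℝ) (w : Finset (Fin p) → Fin p → ℝ)
    (hsupp : ∀ G ∈ 𝒢s, IsSupported G (w G))
    (hsum : ∑ G ∈ 𝒢s, w G = x)
    (hdisj : ∀ G ∈ 𝒢s, ∀ G' ∈ 𝒢s, G ≠ G' → ∀ i, w G i = 0 ∨ w G' i = 0)
    (hsparse : ∀ G ∈ 𝒢s,
      ((Finset.univ.filter fun i => w G i ≠ 0).card : ℝ) ≤ (B : ℝ) * α) :
    soslasso 𝒢 x ≤ (1 + Real.sqrt ((B : ℝ) * α)) * Real.sqrt (𝒢s.card) * l2 x := by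
  classical
  set w' : Finset (Fin p) → Fin p → ℝ := fun G => if G ∈ 𝒢s then w G else 0 with hw'
  -- Step 1: soslasso ≤ value at w'
  have hfeas : Feasible 𝒢 x w' := by
    constructor
    · intro G hG i hi
      by_cases h : G ∈ 𝒢s
      · simp only [hw', if_pos h]; exact hsupp G h i hi
      · simp [hw', h]
    · rw [← hsum]
      simp only [hw']
      rw [Finset.sum_ite_mem, Finset.inter_eq_right.mpr hsub]
  have hval : ∑ G ∈ 𝒢, (l2 (w' G) + l1 (w' G)) = ∑ G ∈ 𝒢s, (l2 (w G) + l1 (w G)) := by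
    have e1 : ∑ G ∈ 𝒢, (l2 (w' G) + l1 (w' G)) = ∑ G ∈ 𝒢s, (l2 (w' G) + l1 (w' G)) := by
      symm
      apply Finset.sum_subset hsub
      intro G _ hG
      simp [hw', hG, l2, l1]
    rw [e1]
    exact Finset.sum_congr rfl fun G hG => by simp [hw', hG]
  have hstep1 : soslasso 𝒢 x ≤ ∑ G ∈ 𝒢s, (l2 (w G) + l1 (w G)) := by
    rw [← hval]
    apply csInf_le
    · refine ⟨0, ?_⟩
      rintro r ⟨v, _, rfl⟩
      exact Finset.sum_nonneg fun G _ => add_nonneg (l2_nonneg' _) (l1_nonneg' _)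
    · exact ⟨w', hfeas, rfl⟩
  -- Step 2: bound each term
  have hterm : ∀ G ∈ 𝒢s, l2 (w G) + l1 (w G) ≤
      (1 + Real.sqrt ((B : ℝ) * α)) * l2 (w G) := by
    intro G hG
    have := l1_le_sqrt_mul_l2 (w G) ((B : ℝ) * α) (hsparse G hG)
    nlinarith [l2_nonneg' (w G)]
  -- Step 3: Cauchy–Schwarz over groups
  have hCS : ∑ G ∈ 𝒢s, l2 (w G) ≤
      Real.sqrt 𝒢s.card * Real.sqrt (∑ G ∈ 𝒢s, l2 (w G) ^ 2) :=
    sum_le_sqrt_card_mul 𝒢s _ fun G _ => l2_nonneg' _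
  -- Step 4: ∑ l2² = l2 x ²
  have hkey : ∑ G ∈ 𝒢s, l2 (w G) ^ 2 = l2 x ^ 2 := by
    rw [l2_sq']
    simp only [l2_sq']
    rw [Finset.sum_comm]
    apply Finset.sum_congr rfl
    intro i _
    have hxi : x i = ∑ G ∈ 𝒢s, w G i := by
      rw [← hsum]; simp [Finset.sum_apply]
    rw [hxi, sq, Finset.sum_mul_sum]
    apply Finset.sum_congr rfl
    intro G hG
    have hsingle : ∑ G' ∈ 𝒢s, w G i * w G' i = w G i * w G i := by
      apply Finset.sum_eq_single_of_mem G hG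
      intro G' hG' hne
      rcases hdisj G hG G' hG' (Ne.symm hne) i with h | h <;> simp [h]
    rw [hsingle, ← sq]
  have hl2x : Real.sqrt (∑ G ∈ 𝒢s, l2 (w G) ^ 2) = l2 x := by
    rw [hkey, Real.sqrt_sq (l2_nonneg' x)]
  have hc : (0:ℝ) ≤ 1 + Real.sqrt ((B : ℝ) * α) := by positivity
  calc soslasso 𝒢 x ≤ ∑ G ∈ 𝒢s, (l2 (w G) + l1 (w G)) := hstep1
    _ ≤ ∑ G ∈ 𝒢s, (1 + Real.sqrt ((B : ℝ) * α)) * l2 (w G) :=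
        Finset.sum_le_sum hterm
    _ = (1 + Real.sqrt ((B : ℝ) * α)) * ∑ G ∈ 𝒢s, l2 (w G) := by
        rw [Finset.mul_sum]
    _ ≤ (1 + Real.sqrt ((B : ℝ) * α)) *
        (Real.sqrt 𝒢s.card * Real.sqrt (∑ G ∈ 𝒢s, l2 (w G) ^ 2)) :=
        mul_le_mul_of_nonneg_left hCS hc
    _ = (1 + Real.sqrt ((B : ℝ) * α)) * Real.sqrt (𝒢s.card) * l2 x := by
        rw [hl2x, mul_assoc]
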